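/- arXiv:1903.00046 — 6 statements merged into one kernel-verified Lean document; each statement's English description precedes it below -/
import Mathlib

section
/- Suppose x : [0,∞) → ℝ^d is differentiable and satisfies x'(t) = f(x(t)) for all t ≥ 0. If x(0) ∈ X (i.e. all components of x(0) are non-negative and sum to 1), then x(t) ∈ X for all t ≥ 0; that is, the set X is positively invariant under the flow of the ODE x' = f(x). -/
open Matrix Finset

open Set Filter Topology in
lemma negpart_sq_hasDerivAt (y : ℝ) :
    HasDerivAt (fun z : ℝ => (min z 0) ^ 2) (2 * min y 0) y := by
  rcases lt_trichotomy y 0 with h | h | h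
  · have h2 : HasDerivAt (fun z : ℝ => z ^ 2) (2 * y) y := by
      simpa using hasDerivAt_pow 2 y
    have heq : (fun z : ℝ => (min z 0) ^ 2) =ᶠ[𝓝 y] fun z : ℝ => z ^ 2 := by
      filter_upwards [eventually_lt_nhds h] with z hz
      rw [min_eq_left hz.le]
    rw [min_eq_left h.le]
    exact h2.congr_of_eventuallyEq heq
  · subst h
    rw [hasDerivAt_iff_tendsto_slope]
    have hb : ∀ z : ℝ, z ∈ ({(0:ℝ)}ᶜ : Set ℝ) → ‖slope (fun z : ℝ => (min z 0) ^ 2) 0 z‖ ≤ |z| := by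
      intro z hz
      have hz0 : z ≠ 0 := hz
      have hsl : slope (fun z : ℝ => (min z 0) ^ 2) 0 z = (min z 0) ^ 2 / z := by
        simp [slope_def_field]
      rw [hsl, Real.norm_eq_abs, abs_div]
      have hmin : |min z 0| ≤ |z| := by
        rcases le_or_gt z 0 with hz' | hz'
        · rw [min_eq_left hz']
        · rw [min_eq_right hz'.le]; simpa using abs_nonneg z
      have h1 : |(min z 0) ^ 2| ≤ |z| * |z| := by
        rw [abs_pow, sq]
        exact mul_le_mul hmin hmin (abs_nonneg _) (abs_nonneg _)
      rw [div_le_iff₀ (abs_pos.2 hz0)]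
      exact h1
    have habs : Tendsto (fun z : ℝ => |z|) (𝓝[≠] (0:ℝ)) (𝓝 0) := by
      have := (continuous_abs.tendsto (0:ℝ)).mono_left (nhdsWithin_le_nhds (s := {(0:ℝ)}ᶜ))
      simpa using this
    have := squeeze_zero_norm' (Eventually.mono self_mem_nhdsWithin hb) habs
    have h00 : (2:ℝ) * min 0 0 = 0 := by simp
    rw [h00]; exact this
  · have heq : (fun z : ℝ => (min z 0) ^ 2) =ᶠ[𝓝 y] fun _ : ℝ => (0:ℝ) := by
      filter_upwards [eventually_gt_nhds h] with z hz
      rw [min_eq_right hz.le]; ring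
    rw [min_eq_right h.le]
    simpa using (hasDerivAt_const y (0:ℝ)).congr_of_eventuallyEq heq

open Set Filter Topology in
/-- The set `X = {x : ∀ j, 0 ≤ x j ∧ ∑ j, x j = 1}` is positively
invariant under the flow of the Jain–Krishna ODE `x' = f(x)`, where
`f(x)_j = (Cx)_j − x_j ∑_k (Cx)_k`. -/
theorem jain_krishna_positively_invariant
    (d : ℕ) (hd : 2 ≤ d)
    (C : Matrix (Fin d) (Fin d) ℝ)
    (hC01 : ∀ i j, C i j = 0 ∨ C i j = 1)
    (hCdiag : ∀ j, C j j = 0)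
    (f : (Fin d → ℝ) → (Fin d → ℝ))
    (hf : ∀ x j, f x j = C.mulVec x j - x j * ∑ k, C.mulVec x k)
    (x : ℝ → Fin d → ℝ)
    (hx : ∀ t, 0 ≤ t → HasDerivAt x (f (x t)) t)
    (h0pos : ∀ j, 0 ≤ x 0 j) (h0sum : ∑ j, x 0 j = 1) :
    ∀ t, 0 ≤ t → (∀ j, 0 ≤ x t j) ∧ ∑ j, x t j = 1 := by
  intro T hT
  -- componentwise derivatives
  have hxj : ∀ s : ℝ, 0 ≤ s → ∀ j, HasDerivAt (fun t => x t j) (f (x s) j) s := by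
    intro s hs j
    exact hasDerivAt_pi.1 (hx s hs) j
  -- the Lyapunov-type function W and its derivative W'
  set W : ℝ → ℝ :=
    fun t => (∑ j, (min (x t j) 0) ^ 2) + ((∑ j, x t j) - 1) ^ 2 with hW_def
  set W' : ℝ → ℝ :=
    fun s => (∑ j, 2 * min (x s j) 0 * f (x s) j)
      + 2 * ((∑ j, x s j) - 1) * (∑ j, f (x s) j) with hW'_def
  have hW : ∀ s : ℝ, 0 ≤ s → HasDerivAt W (W' s) s := by
    intro s hs
    have h1 : HasDerivAt (fun t => ∑ j, (min (x t j) 0) ^ 2)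
        (∑ j, 2 * min (x s j) 0 * f (x s) j) s := by
      apply HasDerivAt.fun_sum
      intro j _
      have := (negpart_sq_hasDerivAt (x s j)).comp s (hxj s hs j)
      exact this
    have hSd : HasDerivAt (fun t => ∑ j, x t j) (∑ j, f (x s) j) s :=
      HasDerivAt.fun_sum fun j _ => hxj s hs j
    have h2 : HasDerivAt (fun t => ((∑ j, x t j) - 1) ^ 2)
        (2 * ((∑ j, x s j) - 1) * (∑ j, f (x s) j)) s := by
      have := (hSd.sub_const 1).pow 2
      norm_num at this
      exact this
    exact h1.add h2
  -- continuity and a bound on the trajectory on [0, T]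
  have hxc : ContinuousOn x (Icc 0 T) := fun s hs => (hx s hs.1).continuousAt.continuousWithinAt
  obtain ⟨M0, hM0⟩ := isCompact_Icc.exists_bound_of_continuousOn hxc
  set M : ℝ := max M0 0 with hM_def
  have hMnn : (0:ℝ) ≤ M := le_max_right _ _
  have hM : ∀ s ∈ Icc (0:ℝ) T, ∀ j, |x s j| ≤ M := by
    intro s hs j
    calc |x s j| = ‖x s j‖ := rfl
      _ ≤ ‖x s‖ := norm_le_pi_norm (x s) j
      _ ≤ M0 := hM0 s hs
      _ ≤ M := le_max_left _ _
  set B : ℝ := d * (d * M) with hB_def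
  have hBnn : (0:ℝ) ≤ B := by positivity
  have hCb : ∀ i j, |C i j| ≤ 1 := by
    intro i j; rcases hC01 i j with h | h <;> simp [h]
  have hmv : ∀ s ∈ Icc (0:ℝ) T, ∀ k, |C.mulVec (x s) k| ≤ d * M := by
    intro s hs k
    calc |C.mulVec (x s) k| = |∑ l, C k l * x s l| := by
          simp [Matrix.mulVec, dotProduct]
      _ ≤ ∑ l, |C k l * x s l| := Finset.abs_sum_le_sum_abs _ _
      _ ≤ ∑ _l : Fin d, M := by
          apply Finset.sum_le_sum
          intro l _
          rw [abs_mul]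
          calc |C k l| * |x s l| ≤ 1 * M :=
                mul_le_mul (hCb k l) (hM s hs l) (abs_nonneg _) zero_le_one
            _ = M := one_mul M
      _ = d * M := by simp [Finset.card_univ, mul_comm]
  have hgB : ∀ s ∈ Icc (0:ℝ) T, |∑ k, C.mulVec (x s) k| ≤ B := by
    intro s hs
    calc |∑ k, C.mulVec (x s) k| ≤ ∑ k, |C.mulVec (x s) k| := Finset.abs_sum_le_sum_abs _ _
      _ ≤ ∑ _k : Fin d, (d * M) := Finset.sum_le_sum fun k _ => hmv s hs k
      _ = B := by simp [hB_def, Finset.card_univ, mul_comm]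
  set K : ℝ := 2 * d + 2 * B with hK_def
  -- the Gronwall bound
  have bound : ∀ s ∈ Ico (0:ℝ) T, W' s ≤ K * W s + 0 := by
    intro s hs
    have hsI : s ∈ Icc (0:ℝ) T := ⟨hs.1, hs.2.le⟩
    set m : Fin d → ℝ := fun j => min (x s j) 0 with hm_def
    set g : ℝ := ∑ k, C.mulVec (x s) k with hg_def
    set Q : ℝ := ∑ j, m j ^ 2 with hQ_def
    set Sv : ℝ := ∑ j, x s j with hSv_def
    have hgb := abs_le.1 (hgB s hsI)
    have hQnn : (0:ℝ) ≤ Q := Finset.sum_nonneg fun j _ => sq_nonneg _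
    have hmnp : ∀ j, m j ≤ 0 := fun j => min_le_right _ _
    have hmle : ∀ j, m j ≤ x s j := fun j => min_le_left _ _
    have hmsq : ∀ j, m j * x s j = m j ^ 2 := by
      intro j
      rcases le_or_gt (x s j) 0 with h | h
      · rw [hm_def]; simp only [min_eq_left h]; ring
      · rw [hm_def]; simp [min_eq_right h.le]
    -- step 1: sum of m_j (Cx)_j ≤ d Q
    have hA : ∑ j, m j * C.mulVec (x s) j ≤ d * Q := by
      have per : ∀ j, m j * C.mulVec (x s) j ≤ ∑ k, (m j ^ 2 + m k ^ 2) / 2 := by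
        intro j
        have hexp : m j * C.mulVec (x s) j = ∑ k, m j * (C j k * x s k) := by
          simp [Matrix.mulVec, dotProduct, Finset.mul_sum]
        rw [hexp]
        apply Finset.sum_le_sum
        intro k _
        rcases hC01 j k with h | h
        · rw [h, zero_mul, mul_zero]; positivity
        · rw [h, one_mul]
          have h1 : m j * x s k ≤ m j * m k := mul_le_mul_of_nonpos_left (hmle k) (hmnp j)
          nlinarith [sq_nonneg (m j - m k)]
      calc ∑ j, m j * C.mulVec (x s) j ≤ ∑ j, ∑ k, (m j ^ 2 + m k ^ 2) / 2 :=
            Finset.sum_le_sum fun j _ => per j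
        _ = d * Q := by
            simp only [add_div, Finset.sum_add_distrib, Finset.sum_const, Finset.card_univ,
              Fintype.card_fin, nsmul_eq_mul, ← Finset.sum_div]
            rw [← Finset.mul_sum, ← Finset.sum_div]
            ring
    -- rewrite W' s
    have hsumf : ∑ j, f (x s) j = g - Sv * g := by
      simp only [hf]
      rw [Finset.sum_sub_distrib, ← Finset.sum_mul]
    have hW'eq : W' s = 2 * (∑ j, m j * C.mulVec (x s) j) - 2 * g * Q - 2 * (Sv - 1) ^ 2 * g := by
      rw [hW'_def]
      simp only [hf]
      have e1 : ∑ j, 2 * m j * (C.mulVec (x s) j - x s j * g)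
          = 2 * (∑ j, m j * C.mulVec (x s) j) - 2 * g * Q := by
        rw [hQ_def, Finset.mul_sum, Finset.mul_sum]
        rw [← Finset.sum_sub_distrib]
        apply Finset.sum_congr rfl
        intro j _
        rw [← hmsq j]
        ring
      have e2 : (∑ j, (C.mulVec (x s) j - x s j * g)) = g - Sv * g := by
        rw [Finset.sum_sub_distrib, ← Finset.sum_mul]
      rw [e1, e2]  -- careful: e1 LHS must match
      ring
    have hWeq : W s = Q + (Sv - 1) ^ 2 := rfl
    rw [hW'eq, hWeq, hK_def]
    have hdnn : (0:ℝ) ≤ (d:ℝ) := Nat.cast_nonneg d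
    rw [← hg_def] at hgb
    have hBg : (0:ℝ) ≤ B + g := by linarith [hgb.1]
    nlinarith [hA, mul_nonneg hBg hQnn, mul_nonneg hBg (sq_nonneg (Sv - 1)),
      mul_nonneg hdnn (sq_nonneg (Sv - 1))]
  -- continuity of W on [0,T]
  have hWc : ContinuousOn W (Icc 0 T) := fun s hs =>
    (hW s hs.1).continuousAt.continuousWithinAt
  -- slope condition
  have hslope : ∀ s ∈ Ico (0:ℝ) T, ∀ r, W' s < r →
      ∃ᶠ z in 𝓝[>] s, (z - s)⁻¹ * (W z - W s) < r := by
    intro s hs r hr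
    have ht : Tendsto (slope W s) (𝓝[≠] s) (𝓝 (W' s)) :=
      hasDerivAt_iff_tendsto_slope.1 (hW s hs.1)
    have ht2 : Tendsto (slope W s) (𝓝[>] s) (𝓝 (W' s)) :=
      ht.mono_left (nhdsWithin_mono _ fun z hz => ne_of_gt hz)
    have hev : ∀ᶠ z in 𝓝[>] s, slope W s z < r := ht2.eventually (eventually_lt_nhds hr)
    apply hev.frequently.mono
    intro z hz
    rwa [slope_def_field, div_eq_inv_mul] at hz
  have hW0 : W 0 ≤ 0 := by
    have : ∀ j, min (x 0 j) 0 = 0 := fun j => min_eq_right (h0pos j)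
    simp [hW_def, this, h0sum]
  have hfinal := le_gronwallBound_of_liminf_deriv_right_le hWc hslope hW0 bound T
    (right_mem_Icc.2 hT)
  rw [gronwallBound_ε0_δ0] at hfinal
  -- extract conclusions
  have hQnnT : (0:ℝ) ≤ ∑ j, (min (x T j) 0) ^ 2 := Finset.sum_nonneg fun j _ => sq_nonneg _
  have hsq : (0:ℝ) ≤ ((∑ j, x T j) - 1) ^ 2 := sq_nonneg _
  have hQ0 : ∑ j, (min (x T j) 0) ^ 2 = 0 := by
    have : W T = (∑ j, (min (x T j) 0) ^ 2) + ((∑ j, x T j) - 1) ^ 2 := rfl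
    linarith [hfinal, this ▸ hfinal]
  have hS0 : ((∑ j, x T j) - 1) ^ 2 = 0 := by
    have : W T = (∑ j, (min (x T j) 0) ^ 2) + ((∑ j, x T j) - 1) ^ 2 := rfl
    linarith [this ▸ hfinal]
  constructor
  · intro j
    have := (Finset.sum_eq_zero_iff_of_nonneg (fun j _ => sq_nonneg (min (x T j) 0))).1 hQ0 j
      (Finset.mem_univ j)
    have hmin0 : min (x T j) 0 = 0 := by
      have := sq_eq_zero_iff.1 this
      exact this
    exact min_eq_right_iff.1 hmin0  -- min a b = b → b ≤ a ?
  · have := sq_eq_zero_iff.1 hS0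
    linarith
end

section
/- If the matrix C has at least one nonzero entry (i.e. the directed graph G has at least one edge), then there exists a point x_* ∈ X with f(x_*) = 0, ∑_{j=1}^d (x_*)_j = 1, x_* ≥ 0 componentwise, and x_* not identically zero; that is, the system admits an equilibrium point in X. -/
/-!
For `x` in the simplex, `f x = 0` says exactly that `x` is an eigenvector of `C` (the eigenvalue
is then `∑ k, (C x)_k`), so the theorem is the existence of a nonnegative eigenvector of a
nonnegative matrix (Perron–Frobenius). For a positive matrix `A`, maximize `r` over the compact
set of pairs `(r, x)` with `x` in the simplex and `r x ≤ A x` (Collatz–Wielandt). At a maximizer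
`A x = r x`: otherwise `A` maps the nonzero slack `A x - r x` to a strictly positive vector, and
`r` can be increased at the point `A x`. A nonnegative matrix is a limit of positive ones, and a
limit point of their eigenvectors in the simplex is an eigenvector of the limit.
-/

open Matrix Finset Filter Topology

theorem exists_pos_smul_le {ι : Type*} [Finite ι] (y w : ι → ℝ) (hw : ∀ i, 0 < w i) :
    ∃ ε > (0 : ℝ), ε • y ≤ w := by
  have h : ∀ i, ∀ᶠ ε in 𝓝[>] (0 : ℝ), ε * y i < w i := fun i ↦
    nhdsWithin_le_nhds <| (continuous_id.mul continuous_const).tendsto' 0 0 (zero_mul _)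
      |>.eventually (gt_mem_nhds (hw i))
  obtain ⟨ε, hεy, hε⟩ := ((eventually_all.2 h).and self_mem_nhdsWithin).exists
  exact ⟨ε, hε, fun i ↦ (hεy i).le⟩

theorem inv_sum_smul_mem_stdSimplex {ι : Type*} [Fintype ι] {y : ι → ℝ} (hy : 0 ≤ y)
    (hs : 0 < ∑ i, y i) : (∑ i, y i)⁻¹ • y ∈ stdSimplex ℝ ι :=
  ⟨fun i ↦ smul_nonneg (inv_nonneg.2 hs.le) (hy i), by
    simp only [Pi.smul_apply, smul_eq_mul, ← mul_sum, inv_mul_cancel₀ hs.ne']⟩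

namespace Matrix

variable {ι : Type*} [Fintype ι] {A : Matrix ι ι ℝ} {x : ι → ℝ}

theorem mulVec_nonneg_of_nonneg (hA : ∀ i j, 0 ≤ A i j) (hx : 0 ≤ x) : 0 ≤ A *ᵥ x :=
  fun i ↦ dotProduct_nonneg_of_nonneg (fun j ↦ hA i j) hx

theorem mulVec_pos_of_pos (hA : ∀ i j, 0 < A i j) (hx : 0 ≤ x) (hx₀ : x ≠ 0) (i : ι) :
    0 < (A *ᵥ x) i := by
  obtain ⟨j, hj⟩ : ∃ j, x j ≠ 0 := by simpa [funext_iff] using hx₀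
  calc 0 < A i j * x j := mul_pos (hA i j) ((hx j).lt_of_ne' hj)
    _ ≤ ∑ k, A i k * x k :=
      single_le_sum (fun k _ ↦ mul_nonneg (hA i k).le (hx k)) (mem_univ j)

theorem le_sum_of_smul_le_mulVec (hA : ∀ i j, 0 ≤ A i j) (hx : x ∈ stdSimplex ℝ ι) {r : ℝ}
    (h : r • x ≤ A *ᵥ x) : r ≤ ∑ i, ∑ j, A i j := by
  calc r = ∑ i, (r • x) i := by simp [← mul_sum, hx.2]
    _ ≤ ∑ i, (A *ᵥ x) i := sum_le_sum fun i _ ↦ h i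
    _ ≤ ∑ i, ∑ j, A i j := sum_le_sum fun i _ ↦ sum_le_sum fun j _ ↦
      mul_le_of_le_one_right (hA i j) (mem_Icc_of_mem_stdSimplex hx j).2

theorem eq_sum_mulVec_of_mulVec_eq_smul (hx : x ∈ stdSimplex ℝ ι) {r : ℝ}
    (h : A *ᵥ x = r • x) : r = ∑ i, (A *ᵥ x) i := by
  simp [h, ← mul_sum, hx.2]

def collatzWielandtSet (A : Matrix ι ι ℝ) : Set (ℝ × (ι → ℝ)) :=
  {p | 0 ≤ p.1 ∧ p.2 ∈ stdSimplex ℝ ι ∧ p.1 • p.2 ≤ A *ᵥ p.2}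

theorem isCompact_collatzWielandtSet (hA : ∀ i j, 0 ≤ A i j) :
    IsCompact (collatzWielandtSet A) := by
  refine ((isCompact_Icc (a := 0) (b := ∑ i, ∑ j, A i j)).prod
    (isCompact_stdSimplex ℝ ι)).of_isClosed_subset ?_ ?_
  · exact (isClosed_le continuous_const continuous_fst).inter
      (((isClosed_stdSimplex ℝ ι).preimage continuous_snd).inter
        (isClosed_le (continuous_fst.smul continuous_snd)
          (continuous_const.matrix_mulVec continuous_snd)))
  · rintro ⟨r, x⟩ ⟨hr, hx, hrx⟩
    exact ⟨⟨hr, le_sum_of_smul_le_mulVec hA hx hrx⟩, hx⟩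

theorem collatzWielandtSet_nonempty [Nonempty ι] (hA : ∀ i j, 0 ≤ A i j) :
    (collatzWielandtSet A).Nonempty := by
  classical
  exact ⟨(0, Pi.single (Classical.arbitrary ι) 1), le_rfl, single_mem_stdSimplex ℝ _, by
    simpa using mulVec_nonneg_of_nonneg hA (Pi.single_nonneg.2 zero_le_one)⟩

theorem exists_gt_mem_collatzWielandtSet (hA : ∀ i j, 0 < A i j) {r : ℝ}
    (h : (r, x) ∈ collatzWielandtSet A) (hne : A *ᵥ x ≠ r • x) :
    ∃ p ∈ collatzWielandtSet A, r < p.1 := by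
  obtain ⟨hr, hx, hrx⟩ := h
  set y := A *ᵥ x
  have hy : ∀ i, 0 < y i := mulVec_pos_of_pos hA hx.1 fun h ↦ by simpa [h] using hx.2
  obtain ⟨ε, hε, hεy⟩ := exists_pos_smul_le y (A *ᵥ (y - r • x))
    (mulVec_pos_of_pos hA (sub_nonneg.2 hrx) (sub_ne_zero.2 hne))
  have hAy : (r + ε) • y ≤ A *ᵥ y :=
    calc (r + ε) • y = r • y + ε • y := add_smul r ε y
      _ ≤ r • y + A *ᵥ (y - r • x) := by gcongr
      _ = A *ᵥ y := by rw [mulVec_sub, mulVec_smul]; abel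
  have : Nonempty ι := not_isEmpty_iff.1 fun _ ↦ by simpa using hx.2
  have hs : 0 < ∑ i, y i := sum_pos (fun i _ ↦ hy i) univ_nonempty
  refine ⟨(r + ε, (∑ i, y i)⁻¹ • y),
    ⟨by positivity, inv_sum_smul_mem_stdSimplex (fun i ↦ (hy i).le) hs, ?_⟩, by simpa⟩
  rw [mulVec_smul, smul_comm]
  exact smul_le_smul_of_nonneg_left hAy (inv_nonneg.2 hs.le)

theorem exists_mem_stdSimplex_mulVec_eq_smul_of_pos [Nonempty ι] (hA : ∀ i j, 0 < A i j) :
    ∃ x ∈ stdSimplex ℝ ι, ∃ r : ℝ, A *ᵥ x = r • x := by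
  have hA' : ∀ i j, 0 ≤ A i j := fun i j ↦ (hA i j).le
  obtain ⟨⟨r, x⟩, hrx, hmax⟩ := (isCompact_collatzWielandtSet hA').exists_isMaxOn
    (collatzWielandtSet_nonempty hA') continuous_fst.continuousOn
  refine ⟨x, hrx.2.1, r, by_contra fun hne ↦ ?_⟩
  obtain ⟨p, hp, hrp⟩ := exists_gt_mem_collatzWielandtSet hA hrx hne
  exact (hmax hp).not_gt hrp

theorem exists_mem_stdSimplex_mulVec_eq_sum_smul_of_nonneg [Nonempty ι]
    (hA : ∀ i j, 0 ≤ A i j) : ∃ x ∈ stdSimplex ℝ ι, A *ᵥ x = (∑ i, (A *ᵥ x) i) • x := by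
  set Aₙ : ℕ → Matrix ι ι ℝ := fun n ↦ A + (1 / ((n : ℝ) + 1)) • of fun _ _ ↦ 1
  have hpos : ∀ n i j, 0 < Aₙ n i j := fun n i j ↦ by
    simp only [Aₙ, add_apply, smul_apply, of_apply, smul_eq_mul, mul_one]
    linarith [hA i j, Nat.one_div_pos_of_nat (n := n) (α := ℝ)]
  have hlim : Tendsto Aₙ atTop (𝓝 A) := by
    have h : Tendsto (fun n : ℕ ↦ 1 / ((n : ℝ) + 1)) atTop (𝓝 0) :=
      tendsto_one_div_add_atTop_nhds_zero_nat
    convert tendsto_const_nhds.add (h.smul_const (of fun _ _ ↦ 1 : Matrix ι ι ℝ))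
    simp
  choose x hx r hr using fun n ↦ exists_mem_stdSimplex_mulVec_eq_smul_of_pos (hpos n)
  obtain ⟨x₀, hx₀, φ, hφ, hxφ⟩ := (isCompact_stdSimplex ℝ ι).tendsto_subseq hx
  have hclosed : IsClosed
      {p : Matrix ι ι ℝ × (ι → ℝ) | p.1 *ᵥ p.2 = (∑ i, (p.1 *ᵥ p.2) i) • p.2} := by
    apply isClosed_eq <;> fun_prop
  refine ⟨x₀, hx₀, hclosed.mem_of_tendsto ((hlim.comp hφ.tendsto_atTop).prodMk_nhds hxφ)
    (Eventually.of_forall fun n ↦ ?_)⟩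
  simp only [Set.mem_ofPred_eq, Function.comp_apply]
  rw [← eq_sum_mulVec_of_mulVec_eq_smul (hx _) (hr _), hr]

end Matrix

theorem jain_krishna_equilibrium_exists_general
    (d : ℕ) (hd : 2 ≤ d)
    (C : Matrix (Fin d) (Fin d) ℝ)
    (hC01 : ∀ i j, C i j = 0 ∨ C i j = 1)
    (f : (Fin d → ℝ) → (Fin d → ℝ))
    (hf : ∀ x j, f x j = C.mulVec x j - x j * ∑ k, C.mulVec x k) :
    ∃ xstar : Fin d → ℝ,
      f xstar = 0 ∧ (∑ j, xstar j) = 1 ∧ (∀ j, 0 ≤ xstar j) ∧ xstar ≠ 0 := by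
  have : Nonempty (Fin d) := ⟨⟨0, by omega⟩⟩
  have hC : ∀ i j, 0 ≤ C i j := fun i j ↦ by rcases hC01 i j with h | h <;> simp [h]
  obtain ⟨x, ⟨hx₀, hx₁⟩, hx⟩ := exists_mem_stdSimplex_mulVec_eq_sum_smul_of_nonneg hC
  refine ⟨x, funext fun j ↦ ?_, hx₁, hx₀, fun h ↦ by simp [h] at hx₁⟩
  rw [hf, congrFun hx j, Pi.smul_apply, smul_eq_mul, Pi.zero_apply, mul_comm, sub_self]

/-- If the graph has at least one edge (some entry of `C` is nonzero),
then there exists an equilibrium point `x_*` in `X`, i.e. `f(x_*) = 0`, components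
summing to 1, componentwise non-negative and not identically zero. -/
theorem jain_krishna_equilibrium_exists
    (d : ℕ) (hd : 2 ≤ d)
    (C : Matrix (Fin d) (Fin d) ℝ)
    (hC01 : ∀ i j, C i j = 0 ∨ C i j = 1)
    (hCdiag : ∀ j, C j j = 0)
    (f : (Fin d → ℝ) → (Fin d → ℝ))
    (hf : ∀ x j, f x j = C.mulVec x j - x j * ∑ k, C.mulVec x k)
    (hedge : ∃ i j, C i j ≠ 0) :
    ∃ xstar : Fin d → ℝ,
      f xstar = 0 ∧ (∑ j, xstar j) = 1 ∧ (∀ j, 0 ≤ xstar j) ∧ xstar ≠ 0 :=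
  jain_krishna_equilibrium_exists_general d hd C hC01 f hf
end

section
/- Suppose v ∈ ℝ^d is componentwise non-negative, not identically zero, and satisfies Cv = λv for some real λ ≥ 1. Then the set S = {j ∈ {1,…,d} : v_j > 0} is an autocatalytic set of the directed graph G. -/
open Matrix Finset

theorem Matrix.exists_mul_pos_of_mulVec_apply_pos {m n R : Type*} [Fintype n]
    [NonUnitalNonAssocSemiring R] [LinearOrder R] [AddLeftMono R]
    {C : Matrix m n R} {v : n → R} {i : m} (h : 0 < (C *ᵥ v) i) :
    ∃ j, 0 < C i j * v j := by
  obtain ⟨j, -, hj⟩ := exists_lt_of_sum_lt (s := univ) (f := 0)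
    (g := fun j => C i j * v j) <| by simpa [mulVec, dotProduct] using h
  exact ⟨j, hj⟩

theorem Matrix.exists_eq_one_and_pos_of_mulVec_apply_pos {m n R : Type*} [Fintype n]
    [Semiring R] [LinearOrder R] [AddLeftMono R]
    {C : Matrix m n R} (hC01 : ∀ i j, C i j = 0 ∨ C i j = 1) {v : n → R} {i : m}
    (h : 0 < (C *ᵥ v) i) : ∃ j, C i j = 1 ∧ 0 < v j := by
  obtain ⟨j, hj⟩ := exists_mul_pos_of_mulVec_apply_pos h
  rcases hC01 i j with hCij | hCij
  · simp [hCij] at hj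
  · exact ⟨j, hCij, by simpa [hCij] using hj⟩

theorem eigenvector_support_is_ACS_general
    (d : ℕ)
    (C : Matrix (Fin d) (Fin d) ℝ)
    (hC01 : ∀ i j, C i j = 0 ∨ C i j = 1)
    (hCdiag : ∀ j, C j j = 0)
    (v : Fin d → ℝ) (lam : ℝ)
    (hvpos : ∀ j, 0 ≤ v j) (hvne : v ≠ 0) (hlam : 1 ≤ lam)
    (heig : C.mulVec v = lam • v) :
    ({j : Fin d | 0 < v j}).Nonempty ∧
      ∀ i ∈ {j : Fin d | 0 < v j}, ∃ j ∈ {j : Fin d | 0 < v j}, j ≠ i ∧ C i j = 1 := by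
  refine ⟨(Pi.lt_def.mp (lt_of_le_of_ne hvpos (Ne.symm hvne))).2, fun i hi => ?_⟩
  have hCv : 0 < (C *ᵥ v) i := by
    rw [heig, Pi.smul_apply, smul_eq_mul]
    exact mul_pos (by linarith) hi
  obtain ⟨j, hCij, hvj⟩ := exists_eq_one_and_pos_of_mulVec_apply_pos hC01 hCv
  exact ⟨j, hvj, fun hji => by simp [hji, hCdiag] at hCij, hCij⟩

/-- If `v` is a componentwise non-negative, nonzero eigenvector of
`C` with real eigenvalue `λ ≥ 1`, then the support `S = {j : v j > 0}` is an
autocatalytic set: it is nonempty and every `i ∈ S` has an incoming edge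
`C i j = 1` from some `j ∈ S` with `j ≠ i`. -/
theorem eigenvector_support_is_ACS
    (d : ℕ) (hd : 2 ≤ d)
    (C : Matrix (Fin d) (Fin d) ℝ)
    (hC01 : ∀ i j, C i j = 0 ∨ C i j = 1)
    (hCdiag : ∀ j, C j j = 0)
    (v : Fin d → ℝ) (lam : ℝ)
    (hvpos : ∀ j, 0 ≤ v j) (hvne : v ≠ 0) (hlam : 1 ≤ lam)
    (heig : C.mulVec v = lam • v) :
    ({j : Fin d | 0 < v j}).Nonempty ∧
      ∀ i ∈ {j : Fin d | 0 < v j}, ∃ j ∈ {j : Fin d | 0 < v j}, j ≠ i ∧ C i j = 1 :=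
  eigenvector_support_is_ACS_general d C hC01 hCdiag v lam hvpos hvne hlam heig
end

section
/- Let φ ∈ ℝ and let y : I → ℝ^d be a differentiable function on an interval I satisfying the linear ODE y'(t) = C y(t) − φ y(t), such that for all t ∈ I every component of y(t) is non-negative and y(t) is not identically zero. Then the projected function x(t) := y(t) / (∑_{j=1}^d y_j(t)) satisfies x'(t) = C x(t) − (∑_{k=1}^d (C x(t))_k) x(t) = f(x(t)) for all t ∈ I, for any choice of the free parameter φ. -/
open Matrix Finset

/-- If `y` solves the linear ODE `y' = C y − φ y` on an interval
`I`, with `y(t)` componentwise non-negative and not identically zero for all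
`t ∈ I`, then the projected function `x(t) = y(t) / ∑_j y_j(t)` solves the
Jain–Krishna ODE `x' = f(x)` on `I`, for any choice of the free parameter `φ`. -/
theorem projective_unfolding_solves_JK
    (d : ℕ) (hd : 2 ≤ d)
    (C : Matrix (Fin d) (Fin d) ℝ)
    (hC01 : ∀ i j, C i j = 0 ∨ C i j = 1)
    (hCdiag : ∀ j, C j j = 0)
    (f : (Fin d → ℝ) → (Fin d → ℝ))
    (hf : ∀ x j, f x j = C.mulVec x j - x j * ∑ k, C.mulVec x k)
    (φ : ℝ) (I : Set ℝ) (hI : I.OrdConnected)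
    (y : ℝ → Fin d → ℝ)
    (hy : ∀ t ∈ I, HasDerivAt y (C.mulVec (y t) - φ • y t) t)
    (hypos : ∀ t ∈ I, ∀ j, 0 ≤ y t j)
    (hyne : ∀ t ∈ I, y t ≠ 0)
    (x : ℝ → Fin d → ℝ)
    (hx : ∀ t, x t = (∑ j, y t j)⁻¹ • y t) :
    ∀ t ∈ I, HasDerivAt x (f (x t)) t := by
  intro t ht
  have hnn := hypos t ht
  have hs : 0 < ∑ j, y t j := by
    rcases Function.ne_iff.mp (hyne t ht) with ⟨j, hj⟩
    exact Finset.sum_pos' (fun i _ => hnn i)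
      ⟨j, Finset.mem_univ j, lt_of_le_of_ne (hnn j) (Ne.symm hj)⟩
  have hcomp : ∀ j, HasDerivAt (fun u => y u j) ((C.mulVec (y t) - φ • y t) j) t :=
    fun j => (hasDerivAt_pi.mp (hy t ht)) j
  have hS : HasDerivAt (fun u => ∑ j, y u j)
      (∑ j, (C.mulVec (y t) - φ • y t) j) t :=
    HasDerivAt.fun_sum (fun j _ => hcomp j)
  have hinv : HasDerivAt (fun u => (∑ j, y u j)⁻¹)
      (-(∑ j, (C.mulVec (y t) - φ • y t) j) / (∑ j, y t j) ^ 2) t :=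
    hS.inv hs.ne'
  have hmain := hinv.smul (hy t ht)
  have hxy : x = fun u => (∑ j, y u j)⁻¹ • y u := funext hx
  rw [hxy]
  refine hmain.congr_deriv ?_
  symm
  funext j
  have hCy : C.mulVec ((∑ j, y t j)⁻¹ • y t) = (∑ j, y t j)⁻¹ • C.mulVec (y t) := by
    rw [Matrix.mulVec_smul]
  simp only [hf, hCy, Pi.smul_apply, Pi.add_apply, Pi.sub_apply, smul_eq_mul,
    ← Finset.mul_sum, Finset.sum_sub_distrib]
  field_simp
  ring
end

section
/- (Adaptive Network Dynamics Intertwining) Let x : I → ℝ^d be a differentiable solution of x'(t) = f(x(t)) on an interval I. For n ∈ ℕ define R_n(t) := C^n x(t) and r_n(t) := ∑_{j=1}^d (C^n x(t))_j. Then for every n ≥ 1 and every t ∈ I: r_n'(t) = r_{n+1}(t) − r_n(t) r_1(t), and R_n'(t) = R_{n+1}(t) − r_1(t) R_n(t). -/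
open Matrix Finset

/-- Adaptive Network Dynamics Intertwining: If `x` solves
`x' = f(x)` on an interval `I`, and `R_n(t) := C^n x(t)`,
`r_n(t) := ∑_j (C^n x(t))_j`, then for every `n ≥ 1` and `t ∈ I`:
`r_n' = r_{n+1} − r_n r_1` and `R_n' = R_{n+1} − r_1 R_n`. -/
theorem ANDI_lemma
    (d : ℕ) (hd : 2 ≤ d)
    (C : Matrix (Fin d) (Fin d) ℝ)
    (hC01 : ∀ i j, C i j = 0 ∨ C i j = 1)
    (hCdiag : ∀ j, C j j = 0)
    (f : (Fin d → ℝ) → (Fin d → ℝ))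
    (hf : ∀ x j, f x j = C.mulVec x j - x j * ∑ k, C.mulVec x k)
    (I : Set ℝ) (hI : I.OrdConnected)
    (x : ℝ → Fin d → ℝ)
    (hx : ∀ t ∈ I, HasDerivAt x (f (x t)) t)
    (R : ℕ → ℝ → Fin d → ℝ) (r : ℕ → ℝ → ℝ)
    (hR : ∀ n t, R n t = (C ^ n).mulVec (x t))
    (hr : ∀ n t, r n t = ∑ j, (C ^ n).mulVec (x t) j) :
    ∀ n : ℕ, 1 ≤ n → ∀ t ∈ I,
      HasDerivAt (r n) (r (n + 1) t - r n t * r 1 t) t ∧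
      HasDerivAt (R n) (R (n + 1) t - r 1 t • R n t) t := by

  intro n _ t ht
  have hxj : ∀ j, HasDerivAt (fun s => x s j) (f (x t) j) t :=
    fun j => (hasDerivAt_pi.mp (hx t ht)) j
  have hRj : ∀ (m : ℕ) (j : Fin d),
      HasDerivAt (fun s => (C ^ m).mulVec (x s) j) ((C ^ m).mulVec (f (x t)) j) t := by
    intro m j
    simp only [Matrix.mulVec, dotProduct]
    exact HasDerivAt.fun_sum fun k _ => (hxj k).const_mul _
  have key : ∀ m : ℕ, ∀ j, (C ^ m).mulVec (f (x t)) j =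
      (C ^ (m + 1)).mulVec (x t) j - r 1 t * (C ^ m).mulVec (x t) j := by
    intro m j
    have hfx : f (x t) = C.mulVec (x t) - (r 1 t) • x t := by
      funext j'
      simp [hf, hr, pow_one, mul_comm]
    rw [hfx, Matrix.mulVec_sub, pow_succ, ← Matrix.mulVec_mulVec]
    simp [Matrix.mulVec_smul, mul_comm]
  constructor
  · have h1 : HasDerivAt (fun s => ∑ j, (C ^ n).mulVec (x s) j)
        (∑ j, (C ^ n).mulVec (f (x t)) j) t :=
      HasDerivAt.fun_sum fun j _ => hRj n j
    have he : (fun s => ∑ j, (C ^ n).mulVec (x s) j) = r n := by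
      funext s; rw [hr]
    rw [he] at h1
    convert h1 using 1
    rw [hr, hr]
    simp only [key, Finset.sum_sub_distrib, ← Finset.mul_sum]
    ring
  · have h1 : HasDerivAt (fun s => (C ^ n).mulVec (x s))
        ((C ^ n).mulVec (f (x t))) t :=
      hasDerivAt_pi.mpr fun j => hRj n j
    have he : (fun s => (C ^ n).mulVec (x s)) = R n := by
      funext s; rw [hR]
    rw [he] at h1
    convert h1 using 1
    funext j
    simp only [Pi.sub_apply, Pi.smul_apply, smul_eq_mul, hR, key]
end

section
/- (Inconsistency of the modified model on the boundary) There exist an integer d ≥ 2, a d×d real matrix C with c_{ij} ∈ [−1,1] for i ≠ j and c_{ii} ∈ [−1,0] for all i, an index r ∈ {1,…,d}, and a point x ∈ X with x_r = 0 and x_j > 0 for all j ≠ r, such that f_r(x) < 0 and ∑_{j ≠ r} f_j(x) ≠ 0. Consequently, the modified vector field that replaces f_r by 0 at such a point does not conserve the mass constraint ∑_j x_j = 1. -/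
open Matrix Finset

/-!
Summing `f` over all coordinates gives `(1 − ∑ x) · ∑ (Cx)`, which vanishes on `X`; hence
`∑_{j ≠ r} f_j(x) = −f_r(x)` there, and any point of `X` with `f_r(x) < 0` is a counterexample.
When `x_r = 0` we have `f_r(x) = (Cx)_r`, which is negative as soon as a species present at `x`
harms `r`: take `d = 2`, `c₀₁ = −1`, all other entries `0`, and `x = (0, 1)`.
-/

def jkField {ι : Type*} [Fintype ι] (C : Matrix ι ι ℝ) (x : ι → ℝ) (i : ι) : ℝ :=
  C.mulVec x i - x i * ∑ k, C.mulVec x k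

section

variable {ι : Type*} [Fintype ι] (C : Matrix ι ι ℝ) {x : ι → ℝ}

theorem sum_jkField (x : ι → ℝ) :
    ∑ i, jkField C x i = (1 - ∑ i, x i) * ∑ k, C.mulVec x k := by
  simp only [jkField, sum_sub_distrib, ← sum_mul]
  ring

theorem sum_jkField_eq_zero (hx : ∑ i, x i = 1) : ∑ i, jkField C x i = 0 := by
  rw [sum_jkField, hx, sub_self, zero_mul]

theorem sum_erase_jkField_eq_neg [DecidableEq ι] (hx : ∑ i, x i = 1) (r : ι) :
    ∑ j ∈ univ.erase r, jkField C x j = -jkField C x r := by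
  rw [eq_neg_iff_add_eq_zero, sum_erase_add _ _ (mem_univ r), sum_jkField_eq_zero C hx]

theorem jkField_of_eq_zero {r : ι} (hr : x r = 0) : jkField C x r = C.mulVec x r := by
  rw [jkField, hr, zero_mul, sub_zero]

end

/-- Inconsistency of the modified model on the boundary: There
exist `d ≥ 2`, a matrix `C` with off-diagonal entries in `[-1,1]` and diagonal
entries in `[-1,0]`, an index `r`, and a point `x ∈ X` with `x_r = 0` and all
other components positive, such that `f_r(x) < 0` and `∑_{j ≠ r} f_j(x) ≠ 0`;
hence the modified vector field replacing `f_r` by `0` there does not conserve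
the mass constraint. -/
theorem modified_JK_model_inconsistent :
    ∃ (d : ℕ), 2 ≤ d ∧ ∃ (C : Matrix (Fin d) (Fin d) ℝ),
      (∀ i j, i ≠ j → C i j ∈ Set.Icc (-1 : ℝ) 1) ∧
      (∀ i, C i i ∈ Set.Icc (-1 : ℝ) 0) ∧
      ∃ (r : Fin d) (x : Fin d → ℝ),
        (∀ j, 0 ≤ x j) ∧ (∑ j, x j) = 1 ∧
        x r = 0 ∧ (∀ j, j ≠ r → 0 < x j) ∧
        (C.mulVec x r - x r * ∑ k, C.mulVec x k) < 0 ∧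
        (∑ j ∈ Finset.univ.erase r,
          (C.mulVec x j - x j * ∑ k, C.mulVec x k)) ≠ 0 := by
  set C : Matrix (Fin 2) (Fin 2) ℝ := !![0, -1; 0, 0]
  set x : Fin 2 → ℝ := ![0, 1]
  have hmass : ∑ j, x j = 1 := by simp [x]
  have hx₀ : x 0 = 0 := rfl
  have hf₀ : jkField C x 0 < 0 := by
    rw [jkField_of_eq_zero C hx₀]
    simp [C, x, mulVec, dotProduct]
  refine ⟨2, le_rfl, C, ?_, ?_, 0, x, ?_, hmass, hx₀, ?_, hf₀, ?_⟩
  · intro i j _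
    fin_cases i <;> fin_cases j <;> norm_num [C]
  · intro i
    fin_cases i <;> norm_num [C]
  · intro j
    fin_cases j <;> norm_num [x]
  · intro j hj
    fin_cases j
    · exact absurd rfl hj
    · norm_num [x]
  · change ∑ j ∈ univ.erase 0, jkField C x j ≠ 0
    rw [sum_erase_jkField_eq_neg C hmass]
    exact neg_ne_zero.mpr hf₀.ne
end
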